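/- Let Φ and Φ' be L-layer neural network maps built from filter banks {h_l^{pq}} applied with operators L and L' respectively, each layer having F features (F_0 = F_L = 1), with 1-Lipschitz activation σ satisfying σ(0) = 0. Suppose every filter satisfies ‖h_l^{pq}(L)‖ ≤ 1, ‖h_l^{pq}(L')‖ ≤ 1, and ‖h_l^{pq}(L)g − h_l^{pq}(L')g‖ ≤ Δ‖g‖ for all signals g. Then ‖Φ(L,f) − Φ(L',f)‖ ≤ L F^{L−1} Δ ‖f‖ for every input signal f. -/
import Mathlib


/-- The layer recursion of a convolutional neural network: `net S T Fc f l p` is the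
`p`-th feature at layer `l`, with `net S T Fc f 0 q = f` (single input feature),
`f_l^p = σ(Σ_{q < F_{l-1}} h_l^{pq} f_{l-1}^q)`. -/
noncomputable def net {H : Type*} [NormedAddCommGroup H] [NormedSpace ℝ H]
    (S : H → H) (T : ℕ → ℕ → ℕ → (H →L[ℝ] H)) (Fc : ℕ → ℕ) (f : H) : ℕ → ℕ → H
  | 0, _ => f
  | l + 1, p => S (∑ q ∈ Finset.range (Fc l), T (l + 1) p q (net S T Fc f l q))

/-- abstract Theorem 2: if every filter in the bank has norm at most `1`
for both operators and per-filter stability constant `Δ`, and the activation is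
`1`-Lipschitz with `σ(0)=0`, then the `L`-layer `F`-feature networks satisfy
`‖Φ(L,f) − Φ(L',f)‖ ≤ L F^{L−1} Δ ‖f‖`. -/
theorem stmt_9 {H : Type*} [NormedAddCommGroup H] [NormedSpace ℝ H]
    (Lnum F : ℕ) (hL : 1 ≤ Lnum) (hF : 1 ≤ F)
    (Fc : ℕ → ℕ) (hFc0 : Fc 0 = 1) (hFcL : Fc Lnum = 1)
    (hFcmid : ∀ l, 1 ≤ l → l < Lnum → Fc l = F)
    (T T' : ℕ → ℕ → ℕ → (H →L[ℝ] H)) (Δ : ℝ) (hΔ : 0 ≤ Δ)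
    (hTnorm : ∀ l p q, ‖T l p q‖ ≤ 1) (hT'norm : ∀ l p q, ‖T' l p q‖ ≤ 1)
    (hstab : ∀ l p q, ∀ g : H, ‖T l p q g - T' l p q g‖ ≤ Δ * ‖g‖)
    (S : H → H) (hS : LipschitzWith 1 S) (hS0 : S 0 = 0) :
    ∀ f : H, ‖net S T Fc f Lnum 0 - net S T' Fc f Lnum 0‖ ≤
      (Lnum : ℝ) * (F : ℝ) ^ (Lnum - 1) * Δ * ‖f‖ := by
  intro f
  have hSnorm : ∀ x y : H, ‖S x - S y‖ ≤ ‖x - y‖ := by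
    intro x y
    have := hS.dist_le_mul x y
    simpa [dist_eq_norm] using this
  set P : ℕ → ℝ := fun l => ∏ j ∈ Finset.range l, (Fc j : ℝ) with hP
  -- bound on the perturbed network
  have hbound : ∀ l q, ‖net S T' Fc f l q‖ ≤ P l * ‖f‖ := by
    intro l
    induction l with
    | zero => intro q; simp [net, hP]
    | succ l ih =>
      intro p
      calc ‖net S T' Fc f (l+1) p‖
          = ‖S (∑ q ∈ Finset.range (Fc l), T' (l+1) p q (net S T' Fc f l q)) - S 0‖ := by
            rw [hS0, sub_zero]; rfl
        _ ≤ ‖(∑ q ∈ Finset.range (Fc l), T' (l+1) p q (net S T' Fc f l q)) - 0‖ := hSnorm _ _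
        _ = ‖∑ q ∈ Finset.range (Fc l), T' (l+1) p q (net S T' Fc f l q)‖ := by rw [sub_zero]
        _ ≤ ∑ q ∈ Finset.range (Fc l), ‖T' (l+1) p q (net S T' Fc f l q)‖ := norm_sum_le _ _
        _ ≤ ∑ q ∈ Finset.range (Fc l), P l * ‖f‖ := by
            apply Finset.sum_le_sum
            intro q _
            calc ‖T' (l+1) p q (net S T' Fc f l q)‖
                ≤ ‖T' (l+1) p q‖ * ‖net S T' Fc f l q‖ := (T' (l+1) p q).le_opNorm _
              _ ≤ 1 * ‖net S T' Fc f l q‖ :=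
                  mul_le_mul_of_nonneg_right (hT'norm _ _ _) (norm_nonneg _)
              _ = ‖net S T' Fc f l q‖ := one_mul _
              _ ≤ P l * ‖f‖ := ih q
        _ = (Fc l : ℝ) * (P l * ‖f‖) := by
            rw [Finset.sum_const, Finset.card_range, nsmul_eq_mul]
        _ = P (l+1) * ‖f‖ := by simp only [P, Finset.prod_range_succ]; ring
  have hPnonneg : ∀ l, 0 ≤ P l := by
    intro l
    apply Finset.prod_nonneg
    intro j _
    positivity
  -- error recursion
  have herr : ∀ l p, ‖net S T Fc f l p - net S T' Fc f l p‖ ≤ (l : ℝ) * P l * Δ * ‖f‖ := by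
    intro l
    induction l with
    | zero => intro q; simp [net]
    | succ l ih =>
      intro p
      calc ‖net S T Fc f (l+1) p - net S T' Fc f (l+1) p‖
          = ‖S (∑ q ∈ Finset.range (Fc l), T (l+1) p q (net S T Fc f l q))
              - S (∑ q ∈ Finset.range (Fc l), T' (l+1) p q (net S T' Fc f l q))‖ := rfl
        _ ≤ ‖(∑ q ∈ Finset.range (Fc l), T (l+1) p q (net S T Fc f l q))
              - ∑ q ∈ Finset.range (Fc l), T' (l+1) p q (net S T' Fc f l q)‖ := hSnorm _ _
        _ = ‖∑ q ∈ Finset.range (Fc l),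
              (T (l+1) p q (net S T Fc f l q) - T' (l+1) p q (net S T' Fc f l q))‖ := by
            rw [Finset.sum_sub_distrib]
        _ ≤ ∑ q ∈ Finset.range (Fc l),
              ‖T (l+1) p q (net S T Fc f l q) - T' (l+1) p q (net S T' Fc f l q)‖ :=
            norm_sum_le _ _
        _ ≤ ∑ q ∈ Finset.range (Fc l),
              ((l : ℝ) * P l * Δ * ‖f‖ + Δ * (P l * ‖f‖)) := by
            apply Finset.sum_le_sum
            intro q _
            have h1 : ‖T (l+1) p q (net S T Fc f l q) - T' (l+1) p q (net S T' Fc f l q)‖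
                ≤ ‖T (l+1) p q (net S T Fc f l q) - T (l+1) p q (net S T' Fc f l q)‖
                  + ‖T (l+1) p q (net S T' Fc f l q) - T' (l+1) p q (net S T' Fc f l q)‖ :=
              norm_sub_le_norm_sub_add_norm_sub _ _ _
            have h2 : ‖T (l+1) p q (net S T Fc f l q) - T (l+1) p q (net S T' Fc f l q)‖
                ≤ (l : ℝ) * P l * Δ * ‖f‖ := by
              rw [← map_sub]
              calc ‖T (l+1) p q (net S T Fc f l q - net S T' Fc f l q)‖
                  ≤ ‖T (l+1) p q‖ * ‖net S T Fc f l q - net S T' Fc f l q‖ :=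
                    (T (l+1) p q).le_opNorm _
                _ ≤ 1 * ‖net S T Fc f l q - net S T' Fc f l q‖ :=
                    mul_le_mul_of_nonneg_right (hTnorm _ _ _) (norm_nonneg _)
                _ = ‖net S T Fc f l q - net S T' Fc f l q‖ := one_mul _
                _ ≤ (l : ℝ) * P l * Δ * ‖f‖ := ih q
            have h3 : ‖T (l+1) p q (net S T' Fc f l q) - T' (l+1) p q (net S T' Fc f l q)‖
                ≤ Δ * (P l * ‖f‖) := by
              calc ‖T (l+1) p q (net S T' Fc f l q) - T' (l+1) p q (net S T' Fc f l q)‖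
                  ≤ Δ * ‖net S T' Fc f l q‖ := hstab _ _ _ _
                _ ≤ Δ * (P l * ‖f‖) := mul_le_mul_of_nonneg_left (hbound l q) hΔ
            linarith
        _ = (Fc l : ℝ) * ((l : ℝ) * P l * Δ * ‖f‖ + Δ * (P l * ‖f‖)) := by
            rw [Finset.sum_const, Finset.card_range, nsmul_eq_mul]
        _ = ((l + 1 : ℕ) : ℝ) * P (l+1) * Δ * ‖f‖ := by
            simp only [P, Finset.prod_range_succ]; push_cast; ring
  have hprod : P Lnum = (F : ℝ) ^ (Lnum - 1) := by
    obtain ⟨n, rfl⟩ : ∃ n, Lnum = n + 1 := ⟨Lnum - 1, (Nat.succ_pred_eq_of_pos hL).symm⟩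
    simp only [P]
    rw [Finset.prod_range_succ']
    rw [hFc0]
    have : ∀ i ∈ Finset.range n, ((Fc (i + 1) : ℝ)) = (F : ℝ) := by
      intro i hi
      rw [hFcmid (i+1) (Nat.succ_le_succ (Nat.zero_le _)) (by simpa using Nat.succ_lt_succ (Finset.mem_range.mp hi))]
    rw [Finset.prod_congr rfl this, Finset.prod_const, Finset.card_range]
    simp
  calc ‖net S T Fc f Lnum 0 - net S T' Fc f Lnum 0‖
      ≤ (Lnum : ℝ) * P Lnum * Δ * ‖f‖ := herr Lnum 0
    _ = (Lnum : ℝ) * (F : ℝ) ^ (Lnum - 1) * Δ * ‖f‖ := by rw [hprod]
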